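/- arXiv:1104.1985 — 3 statements merged into one kernel-verified Lean document; each statement's English description precedes it below -/
import Mathlib

section
/- (Two-point Nevanlinna–Pick, sufficiency) Let ζ₁, ζ₀ be distinct points of 𝔻 and w₁, w₂ ∈ 𝔻. If d_G(w₁, w₂) ≤ d_G(ζ₁, ζ₀), then there exists a holomorphic map h : 𝔻 → 𝔻 with h(ζ₁) = w₁ and h(ζ₀) = w₂. -/
open Complex Metric

/-- Pseudohyperbolic distance on the unit disk. -/
noncomputable def dG (a b : ℂ) : ℝ := ‖(a - b) / (1 - (starRingEnd ℂ a) * b)‖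

lemma NP_denom_ne (a z : ℂ) (ha : ‖a‖ < 1) (hz : ‖z‖ < 1) :
    1 - (starRingEnd ℂ a) * z ≠ 0 := by
  intro h
  have : ‖(starRingEnd ℂ a) * z‖ < 1 := by
    rw [norm_mul, Complex.norm_conj]
    calc ‖a‖ * ‖z‖ ≤ ‖a‖ * 1 :=
        mul_le_mul_of_nonneg_left hz.le (norm_nonneg _)
    _ = ‖a‖ := mul_one _
    _ < 1 := ha
  have h1 : (starRingEnd ℂ a) * z = 1 := by linear_combination -h
  rw [h1] at this; simp at this

lemma NP_key_sq (a z : ℂ) :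
    Complex.normSq (1 - (starRingEnd ℂ a) * z) - Complex.normSq (z - a) =
    (1 - Complex.normSq a) * (1 - Complex.normSq z) := by
  simp [Complex.normSq_apply, Complex.sub_re, Complex.sub_im, Complex.mul_re, Complex.mul_im,
    Complex.conj_re, Complex.conj_im, Complex.one_re, Complex.one_im]
  ring

lemma NP_blaschke_lt (a z : ℂ) (ha : ‖a‖ < 1) (hz : ‖z‖ < 1) :
    ‖(z - a) / (1 - (starRingEnd ℂ a) * z)‖ < 1 := by
  have hd := NP_denom_ne a z ha hz
  have hdpos : 0 < ‖1 - (starRingEnd ℂ a) * z‖ := by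
    simpa [norm_pos_iff] using hd
  rw [norm_div, div_lt_one hdpos]
  have hsq : ‖z - a‖ ^ 2 < ‖1 - (starRingEnd ℂ a) * z‖ ^ 2 := by
    rw [Complex.sq_norm, Complex.sq_norm]
    have h1 : Complex.normSq a < 1 := by
      rw [← Complex.sq_norm]; nlinarith [norm_nonneg a]
    have h2 : Complex.normSq z < 1 := by
      rw [← Complex.sq_norm]; nlinarith [norm_nonneg z]
    nlinarith [NP_key_sq a z]
  exact lt_of_pow_lt_pow_left₀ 2 (norm_nonneg _) hsq

lemma NP_blaschke_inv (a z : ℂ) (ha : ‖a‖ < 1) (hz : ‖z‖ < 1) :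
    ((z - a)/(1 - (starRingEnd ℂ a) * z) + a) /
      (1 + (starRingEnd ℂ a) * ((z - a)/(1 - (starRingEnd ℂ a) * z))) = z := by
  have hd := NP_denom_ne a z ha hz
  have hna : (1:ℂ) - (starRingEnd ℂ a) * a ≠ 0 := by
    rw [← Complex.normSq_eq_conj_mul_self]
    intro h
    have h1 : Complex.normSq a = 1 := by
      have h2 := congrArg Complex.re h; simp at h2; linarith
    nlinarith [Complex.sq_norm a, norm_nonneg a]
  have h2 : 1 + (starRingEnd ℂ a) * ((z - a)/(1 - (starRingEnd ℂ a) * z))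
      = (1 - (starRingEnd ℂ a) * a)/(1 - (starRingEnd ℂ a) * z) := by
    field_simp; ring
  rw [h2]
  rw [div_add' _ _ _ hd, div_div_div_cancel_right₀ hd, div_eq_iff hna]
  ring

lemma NP_abs_one_sub_conj_comm (a b : ℂ) :
    ‖1 - (starRingEnd ℂ a) * b‖ = ‖1 - (starRingEnd ℂ b) * a‖ := by
  rw [← Complex.norm_conj (1 - (starRingEnd ℂ a) * b)]
  simp [map_sub, map_mul, mul_comm]

/-- Two-point Nevanlinna–Pick, sufficiency. -/
theorem nevanlinna_pick_sufficiency (ζ₁ ζ₀ w₁ w₂ : ℂ)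
    (hζ₁ : ζ₁ ∈ ball (0:ℂ) 1) (hζ₀ : ζ₀ ∈ ball (0:ℂ) 1) (hne : ζ₁ ≠ ζ₀)
    (hw₁ : w₁ ∈ ball (0:ℂ) 1) (hw₂ : w₂ ∈ ball (0:ℂ) 1)
    (hd : dG w₁ w₂ ≤ dG ζ₁ ζ₀) :
    ∃ h : ℂ → ℂ, DifferentiableOn ℂ h (ball (0:ℂ) 1) ∧
      Set.MapsTo h (ball (0:ℂ) 1) (ball (0:ℂ) 1) ∧ h ζ₁ = w₁ ∧ h ζ₀ = w₂ := by
  rw [mem_ball_zero_iff] at hζ₁ hζ₀ hw₁ hw₂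
  set g : ℂ → ℂ := fun z => (z - ζ₀) / (1 - (starRingEnd ℂ ζ₀) * z) with hg
  have hgne : g ζ₁ ≠ 0 :=
    div_ne_zero (sub_ne_zero.mpr hne) (NP_denom_ne ζ₀ ζ₁ hζ₀ hζ₁)
  set lam : ℂ := ((w₁ - w₂) / (1 - (starRingEnd ℂ w₂) * w₁)) / g ζ₁ with hlam
  -- |lam| ≤ 1
  have habs_g : ‖g ζ₁‖ = dG ζ₁ ζ₀ := by
    simp only [hg, dG, norm_div]
    rw [NP_abs_one_sub_conj_comm ζ₀ ζ₁]
  have habs_num : ‖(w₁ - w₂) / (1 - (starRingEnd ℂ w₂) * w₁)‖ = dG w₁ w₂ := by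
    simp only [dG, norm_div]
    rw [NP_abs_one_sub_conj_comm w₂ w₁]
  have hgpos : 0 < ‖g ζ₁‖ := by simpa [norm_pos_iff] using hgne
  have hlam1 : ‖lam‖ ≤ 1 := by
    rw [hlam, norm_div, div_le_one hgpos, habs_g, habs_num]; exact hd
  -- bound on lam * g z for z in the ball
  have hu : ∀ z : ℂ, ‖z‖ < 1 → ‖lam * g z‖ < 1 := by
    intro z hz
    rw [norm_mul]
    calc ‖lam‖ * ‖g z‖ ≤ 1 * ‖g z‖ :=
        mul_le_mul_of_nonneg_right hlam1 (norm_nonneg _)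
    _ = ‖g z‖ := one_mul _
    _ < 1 := NP_blaschke_lt ζ₀ z hζ₀ hz
  -- the interpolating function
  refine ⟨fun z => (lam * g z + w₂) / (1 + (starRingEnd ℂ w₂) * (lam * g z)), ?_, ?_, ?_, ?_⟩
  · -- differentiability
    have hden : ∀ z ∈ ball (0:ℂ) 1, 1 + (starRingEnd ℂ w₂) * (lam * g z) ≠ 0 := by
      intro z hz
      rw [mem_ball_zero_iff] at hz
      have := NP_denom_ne (-w₂) (lam * g z) (by simpa using hw₂) (hu z hz)
      simpa [sub_neg_eq_add] using this
    have hgdiff : DifferentiableOn ℂ g (ball (0:ℂ) 1) := by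
      apply DifferentiableOn.div
      · exact (differentiable_id.sub_const ζ₀).differentiableOn
      · exact ((differentiable_const _).sub
          ((differentiable_const _).mul differentiable_id)).differentiableOn
      · intro z hz
        rw [mem_ball_zero_iff] at hz
        exact NP_denom_ne ζ₀ z hζ₀ hz
    apply DifferentiableOn.div
    · exact ((hgdiff.const_mul lam).add_const w₂)
    · exact (((hgdiff.const_mul lam).const_mul _).const_add 1)
    · exact hden
  · -- maps to the ball
    intro z hz
    rw [mem_ball_zero_iff] at hz ⊢
    have := NP_blaschke_lt (-w₂) (lam * g z) (by simpa using hw₂) (hu z hz)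
    simpa [sub_neg_eq_add] using this
  · -- value at ζ₁
    have hval : lam * g ζ₁ = (w₁ - w₂) / (1 - (starRingEnd ℂ w₂) * w₁) := by
      rw [hlam, div_mul_cancel₀ _ hgne]
    simp only [hval]
    exact NP_blaschke_inv w₂ w₁ hw₂ hw₁
  · -- value at ζ₀
    have : g ζ₀ = 0 := by simp [hg]
    simp [this]
end

section
/- Fix z₁, z₂, ε ∈ ℂ with z₂ ≠ ε, z₁ ≠ 0, λ ≠ 0 with λ² = (z₁/(z₂(z₂-ε)))·(z₁/(z₂-ε) + s), and μ with μ² = ε + (s/(2λ))². Set ζ_z = (1/λ)(z₁/(z₂-ε) + s/2). Then Ψ(ζ_z) = (z₁, z₂), where Ψ(ζ) = ((λζ - s/2)(ζ² - μ²), ζ² - (s/(2λ))²). -/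
/-- The perturbed Neil parabola disk passes through the point `z = (z₁, z₂)`. -/
theorem neil_parabola_through_z (z₁ z₂ ε s lam μ : ℂ)
    (hz₂ε : z₂ ≠ ε) (hz₁ : z₁ ≠ 0) (hz₂ : z₂ ≠ 0) (hlam : lam ≠ 0)
    (hlamsq : lam ^ 2 = z₁ / (z₂ * (z₂ - ε)) * (z₁ / (z₂ - ε) + s))
    (hμ : μ ^ 2 = ε + (s / (2 * lam)) ^ 2)
    (Ψ : ℂ → ℂ × ℂ)
    (hΨ : ∀ ζ, Ψ ζ = ((lam * ζ - s / 2) * (ζ ^ 2 - μ ^ 2), ζ ^ 2 - (s / (2 * lam)) ^ 2)) :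
    Ψ (lam⁻¹ * (z₁ / (z₂ - ε) + s / 2)) = (z₁, z₂) := by
  have hsub : z₂ - ε ≠ 0 := sub_ne_zero.mpr hz₂ε
  set ζ : ℂ := lam⁻¹ * (z₁ / (z₂ - ε) + s / 2) with hζ
  field_simp at hlamsq
  have h2 : ζ ^ 2 - (s / (2 * lam)) ^ 2 = z₂ := by
    rw [hζ]; field_simp; ring_nf; linear_combination (-4)*hlamsq
  have h1 : lam * ζ - s / 2 = z₁ / (z₂ - ε) := by
    rw [hζ]; field_simp; ring
  have hμ' : ζ ^ 2 - μ ^ 2 = z₂ - ε := by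
    rw [hμ]; linear_combination h2
  rw [hΨ, h1, hμ', h2, div_mul_cancel₀ _ hsub]
end

section
/- (Key inequality \eqref{startrem}) Suppose ½|z₂|^{3/2} ≤ |z₁| ≤ |z₂|^{3/2}, 0 < |z₂| < 1, and log|ζ₀| + log|φ_{ζ₀}(ζ₁)| + log|φ_{ζ₀}(ζ₂)| ≤ (2-δ) log|z₂|, where w₂ = z₁/(ζ₀ φ_{ζ₂}(ζ₀)) and w₃ = z₂/(ζ₀ φ_{ζ₁}(ζ₀)). Then -log|w₂| - log|w₃| ≤ log|ζ₀| - (½+δ) log|z₂| + log 2. -/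
open Complex Metric Real

/-- The Möbius map associated to a point of the unit disk. -/
noncomputable def phiMap (a ζ : ℂ) : ℂ := (a - ζ) / (1 - (starRingEnd ℂ a) * ζ)

lemma phi_abs_symm (a b : ℂ) :
    ‖phiMap a b‖ = ‖phiMap b a‖ := by
  unfold phiMap
  rw [norm_div, norm_div]
  congr 1
  · exact norm_sub_rev a b
  · have h : (1 - (starRingEnd ℂ a) * b) = starRingEnd ℂ (1 - (starRingEnd ℂ b) * a) := by
      simp [map_mul, mul_comm]
    rw [h, Complex.norm_conj]

lemma phi_ne_zero {a b : ℂ} (ha : ‖a‖ < 1) (hb : ‖b‖ < 1)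
    (hab : a ≠ b) : phiMap a b ≠ 0 := by
  unfold phiMap
  apply div_ne_zero
  · exact sub_ne_zero.mpr hab
  · intro h
    have h1 : (starRingEnd ℂ a) * b = 1 := by
      have := sub_eq_zero.mp h; linear_combination -this
    have := congrArg (‖·‖) h1
    rw [norm_mul, Complex.norm_conj, norm_one] at this
    nlinarith [norm_nonneg a, norm_nonneg b]

/-- The key inequality (startrem). -/
theorem key_inequality (z₁ z₂ ζ₀ ζ₁ ζ₂ w₂ w₃ : ℂ) (δ : ℝ) (hδ : 0 < δ)
    (h₀ : ζ₀ ∈ ball (0:ℂ) 1) (h₁ : ζ₁ ∈ ball (0:ℂ) 1) (h₂ : ζ₂ ∈ ball (0:ℂ) 1)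
    (h₀0 : ζ₀ ≠ 0) (h₀₁ : ζ₀ ≠ ζ₁) (h₀₂ : ζ₀ ≠ ζ₂)
    (hz₁ : z₁ ≠ 0) (hz₂ : z₂ ≠ 0)
    (hsec : (1/2) * ‖z₂‖ ^ ((3:ℝ)/2) ≤ ‖z₁‖ ∧
        ‖z₁‖ ≤ ‖z₂‖ ^ ((3:ℝ)/2))
    (hmod : 0 < ‖z₂‖ ∧ ‖z₂‖ < 1)
    (hw₂ : w₂ = z₁ / (ζ₀ * phiMap ζ₂ ζ₀))
    (hw₃ : w₃ = z₂ / (ζ₀ * phiMap ζ₁ ζ₀))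
    (hhyp : Real.log (‖ζ₀‖) + Real.log (‖(phiMap ζ₀ ζ₁)‖) +
        Real.log (‖(phiMap ζ₀ ζ₂)‖) ≤ (2 - δ) * Real.log (‖z₂‖)) :
    -Real.log (‖w₂‖) - Real.log (‖w₃‖) ≤
      Real.log (‖ζ₀‖) - (1/2 + δ) * Real.log (‖z₂‖) + Real.log 2 := by
  have ha0 : ‖ζ₀‖ < 1 := by simpa using h₀
  have ha1 : ‖ζ₁‖ < 1 := by simpa using h₁
  have ha2 : ‖ζ₂‖ < 1 := by simpa using h₂
  have hφ2 : phiMap ζ₂ ζ₀ ≠ 0 := phi_ne_zero ha2 ha0 (Ne.symm h₀₂)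
  have hφ1 : phiMap ζ₁ ζ₀ ≠ 0 := phi_ne_zero ha1 ha0 (Ne.symm h₀₁)
  have habs0 : ‖ζ₀‖ ≠ 0 := by simpa using h₀0
  have habsφ2 : ‖phiMap ζ₂ ζ₀‖ ≠ 0 := by simpa using hφ2
  have habsφ1 : ‖phiMap ζ₁ ζ₀‖ ≠ 0 := by simpa using hφ1
  have logw2 : Real.log (‖w₂‖) = Real.log (‖z₁‖)
      - Real.log (‖ζ₀‖) - Real.log (‖phiMap ζ₀ ζ₂‖) := by
    rw [hw₂, norm_div, norm_mul, Real.log_div (by simpa using hz₁)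
      (mul_ne_zero habs0 habsφ2), Real.log_mul habs0 habsφ2, phi_abs_symm ζ₂ ζ₀]
    ring
  have logw3 : Real.log (‖w₃‖) = Real.log (‖z₂‖)
      - Real.log (‖ζ₀‖) - Real.log (‖phiMap ζ₀ ζ₁‖) := by
    rw [hw₃, norm_div, norm_mul, Real.log_div (by simpa using hz₂)
      (mul_ne_zero habs0 habsφ1), Real.log_mul habs0 habsφ1, phi_abs_symm ζ₁ ζ₀]
    ring
  have hz1bound : -Real.log (‖z₁‖)
      ≤ Real.log 2 - (3/2) * Real.log (‖z₂‖) := by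
    have hrp : (0:ℝ) < ‖z₂‖ ^ ((3:ℝ)/2) := Real.rpow_pos_of_pos hmod.1 _
    have hpos : (0:ℝ) < (1/2) * ‖z₂‖ ^ ((3:ℝ)/2) := by nlinarith
    have := Real.log_le_log hpos hsec.1
    rw [Real.log_mul (by norm_num) (ne_of_gt hrp),
      Real.log_rpow hmod.1] at this
    have h2 : Real.log (1/2 : ℝ) = -Real.log 2 := by
      rw [one_div, Real.log_inv]
    rw [h2] at this
    linarith
  rw [logw2, logw3]
  linarith
end
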